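/- There exists a pair of orthogonal 9-cycle systems of order 27: two partitions of the edge set of the complete graph K_27 into cycles of length 9 such that any cycle of the first partition and any cycle of the second partition share at most one edge. -/

import Mathlib

/-- A set of edges `C` forms a cycle of length `l`: there is a graph and a closed walk
which is a cycle, has length `l`, and whose edge set is exactly `C`. -/
def IsCycleEdgeSet {V : Type*} (l : ℕ) (C : Set (Sym2 V)) : Prop :=
  ∃ (G : SimpleGraph V) (x : V) (w : G.Walk x x),
    w.IsCycle ∧ w.length = l ∧ C = {e | e ∈ w.edges}

/-- `D` is a decomposition of the edge set of `G` into cycles of length `l`: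
each member of `D` is the edge set of an `l`-cycle contained in `G`, and every
edge of `G` lies in exactly one member of `D`. -/
def IsCycleDecomposition {V : Type*} (G : SimpleGraph V) (l : ℕ)
    (D : Set (Set (Sym2 V))) : Prop :=
  (∀ C ∈ D, IsCycleEdgeSet l C ∧ C ⊆ G.edgeSet) ∧
  (∀ e ∈ G.edgeSet, ∃! C, C ∈ D ∧ e ∈ C)

/-- Two cycle decompositions are orthogonal if any member of the first and any member
of the second share at most one edge. -/
def OrthogonalDecompositions {V : Type*} (D₁ D₂ : Set (Set (Sym2 V))) : Prop :=
  ∀ C₁ ∈ D₁, ∀ C₂ ∈ D₂, (C₁ ∩ C₂).Subsingleton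

/-!
Both systems are cyclic: the vertices form the group `ℤ/27 = Fin 27`, and each system consists of
all translates of three base 9-cycles, with orbits of lengths 27, 9 and 3 (39 = 351 / 9 cycles).
The difference method reduces everything to finitely many checks on the base cycles. Every
nonzero group element is a difference of adjacent vertices of some base cycle, so every edge lies
in a translate. Whenever a translate `c + t` shares an edge with a base cycle `c'` it is contained
in `c'` (which forces `c = c'` and `t` to stabilise `c`), so that edge lies in only one cycle.
Two translates `c₁ + k₁`, `c₂ + k₂` share an edge exactly when a dart of `c₁` shifted by
`k₁ - k₂` is a dart of `c₂` in some orientation; orthogonality means that no shift arises from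
two different darts of `c₁`.
-/

open SimpleGraph

theorem IsCycleEdgeSet.subset_edgeSet_top {V : Type*} {l : ℕ} {C : Set (Sym2 V)}
    (h : IsCycleEdgeSet l C) : C ⊆ (⊤ : SimpleGraph V).edgeSet := by
  obtain ⟨G, x, w, -, -, rfl⟩ := h
  intro e he
  rw [edgeSet_top, Set.mem_compl_iff, Sym2.mem_diagSet]
  exact G.not_isDiag_of_mem_edgeSet (w.edges_subset_edgeSet he)

def cycleDarts {V : Type*} (c : List V) : List (V × V) := c.zip (c.rotate 1)

def cycleEdges {V : Type*} (c : List V) : List (Sym2 V) := (cycleDarts c).map fun p => s(p.1, p.2)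

theorem isCycleEdgeSet_cycleEdges {V : Type*} {c : List V} (hc : c.Nodup) (h3 : 3 ≤ c.length) :
    IsCycleEdgeSet c.length {e | e ∈ cycleEdges c} := by
  obtain _ | ⟨x, _ | ⟨v, rest⟩⟩ := c
  · simp at h3
  · simp at h3
  have hnodup : (v :: rest ++ [x]).Nodup := (List.perm_append_singleton x _).nodup_iff.mpr hc
  have hchain : (v :: rest ++ [x]).IsChain (⊤ : SimpleGraph V).Adj :=
    hnodup.isChain.imp fun _ _ h => (top_adj _ _).mpr h
  obtain ⟨p, hp⟩ : ∃ p : (⊤ : SimpleGraph V).Walk v x, p.support = v :: rest ++ [x] :=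
    ⟨(Walk.ofSupport _ (by simp) hchain).copy rfl (by simp),
      (Walk.support_copy _ _ _).trans (Walk.support_ofSupport _ _)⟩
  have hxv : x ≠ v := fun h => (List.nodup_cons.mp hc).1 (h ▸ List.mem_cons_self)
  have hlen : p.length = rest.length + 1 := by simpa using congrArg List.length hp
  refine ⟨⊤, x, .cons ((top_adj x v).mpr hxv) p, ?_, by simp [hlen], ?_⟩
  · rw [Walk.isCycle_iff_isPath_tail_and_le_length, Walk.tail_cons, Walk.length_cons]
    exact ⟨(Walk.isPath_copy _ _ _).mpr (Walk.IsPath.mk' (hp ▸ hnodup)), by simp at h3; omega⟩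
  · have hzip : List.zipWith Sym2.mk (x :: v :: rest ++ [x]) (v :: rest ++ [x]) =
        List.zipWith Sym2.mk (x :: v :: rest) (v :: rest ++ [x]) := by
      simpa using List.zipWith_append (f := Sym2.mk) (l₁ := x :: v :: rest)
        (l₂ := v :: rest ++ [x]) (l₁' := [x]) (l₂' := []) (by simp)
    rw [Walk.edges_eq_zipWith_support, Walk.support_cons, hp, List.tail_cons,
      ← List.cons_append, hzip, cycleEdges, cycleDarts, List.rotate_cons_succ, List.rotate_zero,
      ← List.map_uncurry_zip_eq_zipWith]
    rfl

theorem cycleDarts_map {V W : Type*} (f : V → W) (c : List V) :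
    cycleDarts (c.map f) = (cycleDarts c).map (Prod.map f f) := by
  simp [cycleDarts, ← List.map_rotate, List.zip_map]

theorem cycleEdges_map {V W : Type*} (f : V → W) (c : List V) :
    cycleEdges (c.map f) = (cycleEdges c).map (Sym2.map f) := by
  simp [cycleEdges, cycleDarts_map, Function.comp_def]

section Development

variable {G : Type*} [AddCommGroup G]

theorem mem_cycleEdges_map_add {c : List G} {k : G} {e : Sym2 G} :
    e ∈ cycleEdges (c.map (· + k)) ↔ ∃ p ∈ cycleDarts c, s(p.1 + k, p.2 + k) = e := by
  rw [cycleEdges_map]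
  simp [cycleEdges]

theorem cycleEdges_map_add_subset {c c' : List G} {t : G}
    (h : cycleEdges (c.map (· + t)) ⊆ cycleEdges c') (k : G) :
    cycleEdges (c.map (· + (t + k))) ⊆ cycleEdges (c'.map (· + k)) := by
  have hmap : c.map (· + (t + k)) = (c.map (· + t)).map (· + k) := by
    simp [Function.comp_def, add_assoc]
  rw [hmap, cycleEdges_map (· + k), cycleEdges_map (· + k) c']
  exact List.map_subset _ h

def development (B : List (List G)) : Set (Set (Sym2 G)) :=
  {C | ∃ c ∈ B, ∃ k : G, C = {e | e ∈ cycleEdges (c.map (· + k))}}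

variable {B : List (List G)}

theorem exists_mem_development_of_sub_eq {c : List G} (hc : c ∈ B) {p : G × G}
    (hp : p ∈ cycleDarts c) {x y : G} (h : p.2 - p.1 = y - x) :
    ∃ C ∈ development B, s(x, y) ∈ C := by
  refine ⟨_, ⟨c, hc, x - p.1, rfl⟩, mem_cycleEdges_map_add.mpr ⟨p, hp, ?_⟩⟩
  congr 1
  · abel
  · rw [← sub_add_cancel p.2 p.1, h]
    abel

theorem exists_mem_development
    (hcover : ∀ d : G, d ≠ 0 → ∃ c ∈ B, ∃ p ∈ cycleDarts c, p.2 - p.1 = d ∨ p.1 - p.2 = d)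
    {x y : G} (hxy : x ≠ y) : ∃ C ∈ development B, s(x, y) ∈ C := by
  obtain ⟨c, hc, p, hp, h | h⟩ := hcover _ (sub_ne_zero.mpr hxy.symm)
  · exact exists_mem_development_of_sub_eq hc hp h
  · rw [Sym2.eq_swap]
    exact exists_mem_development_of_sub_eq hc hp (by rw [← neg_sub, h, neg_sub])

variable [DecidableEq G]

def matchingDarts (c c' : List G) : List ((G × G) × (G × G)) :=
  (cycleDarts c ×ˢ (cycleDarts c' ++ (cycleDarts c').map Prod.swap)).filter
    fun pq => pq.1.2 - pq.1.1 = pq.2.2 - pq.2.1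

/-- Each edge shared by the translate `c + t` and `c'` contributes its own entry `t`. -/
def edgeShifts (c c' : List G) : List G :=
  (matchingDarts c c').map fun pq => pq.2.1 - pq.1.1

theorem exists_mem_matchingDarts {c c' : List G} {k k' : G} {e : Sym2 G}
    (he : e ∈ cycleEdges (c.map (· + k))) (he' : e ∈ cycleEdges (c'.map (· + k'))) :
    ∃ pq ∈ matchingDarts c c', pq.2.1 - pq.1.1 = k - k' ∧ s(pq.1.1 + k, pq.1.2 + k) = e := by
  obtain ⟨⟨a, b⟩, hab, rfl⟩ := mem_cycleEdges_map_add.mp he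
  obtain ⟨⟨a', b'⟩, hab', heq⟩ := mem_cycleEdges_map_add.mp he'
  have hq : (a + k - k', b + k - k') ∈ cycleDarts c' ++ (cycleDarts c').map Prod.swap := by
    rcases Sym2.eq_iff.mp heq with ⟨h₁, h₂⟩ | ⟨h₁, h₂⟩
    · rw [← eq_sub_of_add_eq h₁, ← eq_sub_of_add_eq h₂]
      exact List.mem_append_left _ hab'
    · rw [← eq_sub_of_add_eq h₁, ← eq_sub_of_add_eq h₂]
      exact List.mem_append_right _ (List.mem_map_of_mem hab')
  refine ⟨((a, b), (a + k - k', b + k - k')), ?_, by dsimp only; abel, rfl⟩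
  simp only [matchingDarts, List.mem_filter, List.mem_product, hab, hq, true_and,
    decide_eq_true_eq]
  abel

theorem orthogonalDecompositions_development {B₁ B₂ : List (List G)}
    (h : ∀ c₁ ∈ B₁, ∀ c₂ ∈ B₂, (edgeShifts c₁ c₂).Nodup) :
    OrthogonalDecompositions (development B₁) (development B₂) := by
  rintro _ ⟨c₁, hc₁, k₁, rfl⟩ _ ⟨c₂, hc₂, k₂, rfl⟩ e ⟨he₁, he₂⟩ e' ⟨he₁', he₂'⟩
  obtain ⟨pq, hpq, hshift, rfl⟩ := exists_mem_matchingDarts he₁ he₂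
  obtain ⟨pq', hpq', hshift', rfl⟩ := exists_mem_matchingDarts he₁' he₂'
  rw [List.inj_on_of_nodup_map (h c₁ hc₁ c₂ hc₂) hpq hpq' (hshift.trans hshift'.symm)]

theorem subset_of_mem_development
    (hshift : ∀ c ∈ B, ∀ c' ∈ B, ∀ t ∈ edgeShifts c c',
      cycleEdges (c.map (· + t)) ⊆ cycleEdges c')
    {C C' : Set (Sym2 G)} (hC : C ∈ development B) (hC' : C' ∈ development B) {e : Sym2 G}
    (he : e ∈ C) (he' : e ∈ C') : C ⊆ C' := by
  obtain ⟨c, hc, k, rfl⟩ := hC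
  obtain ⟨c', hc', k', rfl⟩ := hC'
  obtain ⟨pq, hpq, hk, -⟩ := exists_mem_matchingDarts he he'
  have ht : k - k' ∈ edgeShifts c c' := hk ▸ List.mem_map_of_mem hpq
  have hsub := cycleEdges_map_add_subset (hshift c hc c' hc' _ ht) k'
  rw [sub_add_cancel] at hsub
  exact fun _ he => hsub he

theorem isCycleDecomposition_development {l : ℕ} (hl : 3 ≤ l)
    (hB : ∀ c ∈ B, c.Nodup ∧ c.length = l)
    (hcover : ∀ d : G, d ≠ 0 → ∃ c ∈ B, ∃ p ∈ cycleDarts c, p.2 - p.1 = d ∨ p.1 - p.2 = d)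
    (hshift : ∀ c ∈ B, ∀ c' ∈ B, ∀ t ∈ edgeShifts c c',
      cycleEdges (c.map (· + t)) ⊆ cycleEdges c') :
    IsCycleDecomposition ⊤ l (development B) := by
  refine ⟨fun C hC => ?_, fun e he => ?_⟩
  · obtain ⟨c, hc, k, rfl⟩ := hC
    have hcyc := isCycleEdgeSet_cycleEdges ((hB c hc).1.map (add_left_injective k))
      (by simpa [(hB c hc).2] using hl)
    rw [List.length_map, (hB c hc).2] at hcyc
    exact ⟨hcyc, hcyc.subset_edgeSet_top⟩
  · induction e using Sym2.ind with
    | _ x y =>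
      obtain ⟨C, hC, hxyC⟩ := exists_mem_development hcover ((top_adj x y).mp he)
      exact ⟨C, ⟨hC, hxyC⟩, fun C' ⟨hC', hxyC'⟩ =>
        (subset_of_mem_development hshift hC' hC hxyC' hxyC).antisymm
          (subset_of_mem_development hshift hC hC' hxyC hxyC')⟩

end Development

def baseCycles₁ : List (List (Fin 27)) :=
  [[0, 21, 12, 19, 6, 3, 25, 15, 11], [0, 8, 7, 9, 17, 16, 18, 26, 25],
    [0, 12, 24, 9, 21, 6, 18, 3, 15]]

def baseCycles₂ : List (List (Fin 27)) :=
  [[0, 24, 6, 14, 3, 15, 17, 21, 1], [0, 13, 8, 18, 4, 26, 9, 22, 17],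
    [0, 6, 12, 18, 24, 3, 9, 15, 21]]

theorem orthogonal_nine_cycle_systems_order_27 :
    ∃ D₁ D₂ : Set (Set (Sym2 (Fin 27))),
      IsCycleDecomposition (⊤ : SimpleGraph (Fin 27)) 9 D₁ ∧
      IsCycleDecomposition (⊤ : SimpleGraph (Fin 27)) 9 D₂ ∧
      OrthogonalDecompositions D₁ D₂ :=
  ⟨development baseCycles₁, development baseCycles₂,
    isCycleDecomposition_development (by norm_num) (by decide) (by decide) (by decide),
    isCycleDecomposition_development (by norm_num) (by decide) (by decide) (by decide),
    orthogonalDecompositions_development (by decide)⟩
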